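/- Let λ ≠ 0 and k, c₁, c₂ be real constants, let R = √(x²+y²), and consider the Newtonian system in E³ given by ẍ = −∂V/∂x, ÿ = −∂V/∂y, z̈ = −∂V/∂z for the potential V(x,y,z) = −(λ²/2)R² + kx/(y²R) + c₁/y² − (λ²/8)z² + c₂/z². Then along every C² solution defined on a time interval on which y ≠ 0, z ≠ 0 and R ≠ 0, each of the following five quantities is constant (with M₃ = xẏ − yẋ): I₁ = (1/2)(ẋ²+ẏ²+ż²) + V; I₂ = (1/2)M₃² + (kR + c₁x)x/y²; I₃ = (1/2)ż² − (λ²/8)z² + c₂/z²; I₄ = e^{λt}[ M₃(ẏ − λy) + 2c₁x/y² + k(y² + 2x²)/(y²R) ]; I₅ = e^{λt}[ (ż − (λ/2)z)² + 2c₂/z² ]. -/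

import Mathlib

/-! Each quantity is conserved because its time derivative vanishes identically once the
accelerations are replaced by the forces `-∇V`, which are computed in closed form using
`R² = x² + y²`. The motion splits into a planar part in `(x, y)` and an independent vertical
part in `z`; `I₁` is the sum of the planar energy and `I₃`. The exponential integral `I₄`
equals `e^{λt} (u' - λu)` for `u = y M₃`, and is conserved because `u'' = λ² u`. -/

noncomputable section

/-- The superintegrable potential
`V = −(λ²/2)R² + kx/(y²R) + c₁/y² − (λ²/8)z² + c₂/z²` with `R = √(x²+y²)`. -/
def V18 (lam k c₁ c₂ : ℝ) (X Y Z : ℝ) : ℝ :=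
  -(lam ^ 2 / 2) * (X ^ 2 + Y ^ 2) + k * X / (Y ^ 2 * Real.sqrt (X ^ 2 + Y ^ 2))
    + c₁ / Y ^ 2 - lam ^ 2 / 8 * Z ^ 2 + c₂ / Z ^ 2

theorem IsOpen.eq_of_hasDerivAt_zero {𝕜 G : Type*} [RCLike 𝕜] [NormedAddCommGroup G]
    [NormedSpace 𝕜 G] {s : Set 𝕜} {f : 𝕜 → G} (hs : IsOpen s) (hs' : IsPreconnected s)
    (hf : ∀ t ∈ s, HasDerivAt f 0 t) : ∀ t₁ ∈ s, ∀ t₂ ∈ s, f t₁ = f t₂ :=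
  fun _ h₁ _ h₂ => hs.is_const_of_deriv_eq_zero hs'
    (fun t ht => (hf t ht).differentiableAt.differentiableWithinAt)
    (fun t ht => (hf t ht).deriv) h₁ h₂

theorem hasDerivAt_exp_mul_sub_mul_of_hasDerivAt {u v : ℝ → ℝ} {lam t : ℝ}
    (hu : HasDerivAt u (v t) t) (hv : HasDerivAt v (lam ^ 2 * u t) t) :
    HasDerivAt (fun s => Real.exp (lam * s) * (v s - lam * u s)) 0 t := by
  refine (((hasDerivAt_id' t).const_mul lam).exp.fun_mul
    (hv.fun_sub (hu.const_mul lam))).congr_deriv ?_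
  ring

theorem sqrt_sq_add_sq_pos {X Y : ℝ} (hY : Y ≠ 0) : 0 < √(X ^ 2 + Y ^ 2) :=
  Real.sqrt_pos.2 (by positivity)

theorem sq_sqrt_sq_add_sq (X Y : ℝ) : √(X ^ 2 + Y ^ 2) ^ 2 = X ^ 2 + Y ^ 2 :=
  Real.sq_sqrt (by positivity)

theorem HasDerivAt.sqrt_sq_add_sq {f g : ℝ → ℝ} {f' g' t : ℝ} (hf : HasDerivAt f f' t)
    (hg : HasDerivAt g g' t) (hgt : g t ≠ 0) :
    HasDerivAt (fun s => √(f s ^ 2 + g s ^ 2))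
      ((f t * f' + g t * g') / √(f t ^ 2 + g t ^ 2)) t := by
  refine (((hf.fun_pow 2).fun_add (hg.fun_pow 2)).sqrt (by positivity)).congr_deriv ?_
  field_simp
  ring

section Potential

variable (lam k c₁ c₂ : ℝ) {X Y : ℝ} (Z : ℝ)

theorem hasDerivAt_V18_fst (hY : Y ≠ 0) :
    HasDerivAt (fun s => V18 lam k c₁ c₂ s Y Z)
      (-(lam ^ 2 * X) + k / √(X ^ 2 + Y ^ 2) ^ 3) X := by
  have hR := sqrt_sq_add_sq_pos (X := X) hY
  have hid := hasDerivAt_id' X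
  have hRX := hid.sqrt_sq_add_sq (hasDerivAt_const X Y) hY
  unfold V18
  refine (((((hid.fun_pow 2).add_const (Y ^ 2)).const_mul (-(lam ^ 2 / 2))).fun_add
    ((hid.const_mul k).fun_div ((hasDerivAt_const X (Y ^ 2)).fun_mul hRX) (by positivity)))
      |>.add_const (c₁ / Y ^ 2) |>.sub_const (lam ^ 2 / 8 * Z ^ 2)
      |>.add_const (c₂ / Z ^ 2)).congr_deriv ?_
  field_simp
  linear_combination 2 * k * Y ^ 2 * sq_sqrt_sq_add_sq X Y

theorem hasDerivAt_V18_snd (hY : Y ≠ 0) :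
    HasDerivAt (fun s => V18 lam k c₁ c₂ X s Z)
      (-(lam ^ 2 * Y) - k * X * (2 * X ^ 2 + 3 * Y ^ 2) / (Y ^ 3 * √(X ^ 2 + Y ^ 2) ^ 3)
        - 2 * c₁ / Y ^ 3) Y := by
  have hR := sqrt_sq_add_sq_pos (X := X) hY
  have hid := hasDerivAt_id' Y
  have hRY := (hasDerivAt_const Y X).sqrt_sq_add_sq hid hY
  unfold V18
  refine (((((hid.fun_pow 2).const_add (X ^ 2)).const_mul (-(lam ^ 2 / 2))).fun_add
    ((hasDerivAt_const Y (k * X)).fun_div ((hid.fun_pow 2).fun_mul hRY) (by positivity))).fun_add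
      ((hasDerivAt_const Y c₁).fun_div (hid.fun_pow 2) (by positivity))
      |>.sub_const (lam ^ 2 / 8 * Z ^ 2) |>.add_const (c₂ / Z ^ 2)).congr_deriv ?_
  field_simp
  linear_combination -4 * X * Y * k * sq_sqrt_sq_add_sq X Y

theorem hasDerivAt_V18_thd (X Y : ℝ) {Z : ℝ} (hZ : Z ≠ 0) :
    HasDerivAt (fun s => V18 lam k c₁ c₂ X Y s) (-(lam ^ 2 / 4 * Z) - 2 * c₂ / Z ^ 3) Z := by
  have hid := hasDerivAt_id' Z
  unfold V18
  refine ((((hid.fun_pow 2).const_mul (lam ^ 2 / 8)).const_sub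
    (-(lam ^ 2 / 2) * (X ^ 2 + Y ^ 2) + k * X / (Y ^ 2 * √(X ^ 2 + Y ^ 2))
      + c₁ / Y ^ 2)).fun_add
      ((hasDerivAt_const Z c₂).fun_div (hid.fun_pow 2) (by positivity))).congr_deriv ?_
  field_simp
  ring

end Potential

structure PlanarMotionAt (lam k c₁ : ℝ) (x y x' y' : ℝ → ℝ) (t : ℝ) : Prop where
  hasDerivAt_x : HasDerivAt x (x' t) t
  hasDerivAt_y : HasDerivAt y (y' t) t
  hasDerivAt_x' : HasDerivAt x' (lam ^ 2 * x t - k / √(x t ^ 2 + y t ^ 2) ^ 3) t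
  hasDerivAt_y' : HasDerivAt y' (lam ^ 2 * y t
    + k * x t * (2 * x t ^ 2 + 3 * y t ^ 2) / (y t ^ 3 * √(x t ^ 2 + y t ^ 2) ^ 3)
    + 2 * c₁ / y t ^ 3) t
  y_ne_zero : y t ≠ 0

namespace PlanarMotionAt

variable {lam k c₁ : ℝ} {x y x' y' : ℝ → ℝ} {t : ℝ}

theorem radius_pos (h : PlanarMotionAt lam k c₁ x y x' y' t) : 0 < √(x t ^ 2 + y t ^ 2) :=
  sqrt_sq_add_sq_pos h.y_ne_zero

theorem hasDerivAt_radius (h : PlanarMotionAt lam k c₁ x y x' y' t) :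
    HasDerivAt (fun s => √(x s ^ 2 + y s ^ 2))
      ((x t * x' t + y t * y' t) / √(x t ^ 2 + y t ^ 2)) t :=
  h.hasDerivAt_x.sqrt_sq_add_sq h.hasDerivAt_y h.y_ne_zero

theorem hasDerivAt_angularMomentum (h : PlanarMotionAt lam k c₁ x y x' y' t) :
    HasDerivAt (fun s => x s * y' s - y s * x' s)
      (k * (2 * x t ^ 2 + y t ^ 2) / (y t ^ 3 * √(x t ^ 2 + y t ^ 2))
        + 2 * c₁ * x t / y t ^ 3) t := by
  have hy := h.y_ne_zero
  have hR := h.radius_pos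
  refine ((h.hasDerivAt_x.fun_mul h.hasDerivAt_y').fun_sub
    (h.hasDerivAt_y.fun_mul h.hasDerivAt_x')).congr_deriv ?_
  field_simp
  linear_combination -(k * (2 * x t ^ 2 + y t ^ 2)) * sq_sqrt_sq_add_sq (x t) (y t)

theorem hasDerivAt_energy (h : PlanarMotionAt lam k c₁ x y x' y' t) :
    HasDerivAt (fun s => 1 / 2 * (x' s ^ 2 + y' s ^ 2) + (-(lam ^ 2 / 2) * (x s ^ 2 + y s ^ 2)
      + k * x s / (y s ^ 2 * √(x s ^ 2 + y s ^ 2)) + c₁ / y s ^ 2)) 0 t := by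
  have hy := h.y_ne_zero
  have hR := h.radius_pos
  refine (((h.hasDerivAt_x'.fun_pow 2).fun_add (h.hasDerivAt_y'.fun_pow 2)).const_mul (1 / 2)
    |>.fun_add ((((h.hasDerivAt_x.fun_pow 2).fun_add (h.hasDerivAt_y.fun_pow 2)).const_mul
      (-(lam ^ 2 / 2))).fun_add ((h.hasDerivAt_x.const_mul k).fun_div
        ((h.hasDerivAt_y.fun_pow 2).fun_mul h.hasDerivAt_radius)
        (mul_ne_zero (pow_ne_zero 2 hy) hR.ne')) |>.fun_add
      ((hasDerivAt_const t c₁).fun_div (h.hasDerivAt_y.fun_pow 2)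
        (pow_ne_zero 2 hy)))).congr_deriv ?_
  field_simp
  linear_combination 2 * k * y t * (y t * x' t - 2 * x t * y' t) * sq_sqrt_sq_add_sq (x t) (y t)

theorem hasDerivAt_I₂ (h : PlanarMotionAt lam k c₁ x y x' y' t) :
    HasDerivAt (fun s => 1 / 2 * (x s * y' s - y s * x' s) ^ 2
      + (k * √(x s ^ 2 + y s ^ 2) + c₁ * x s) * x s / y s ^ 2) 0 t := by
  have hy := h.y_ne_zero
  have hR := h.radius_pos
  refine ((h.hasDerivAt_angularMomentum.fun_pow 2).const_mul (1 / 2) |>.fun_add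
    ((((h.hasDerivAt_radius.const_mul k).fun_add (h.hasDerivAt_x.const_mul c₁)).fun_mul
      h.hasDerivAt_x).fun_div (h.hasDerivAt_y.fun_pow 2) (pow_ne_zero 2 hy))).congr_deriv ?_
  field_simp
  linear_combination 2 * k * y t * (y t * x' t - 2 * x t * y' t) * sq_sqrt_sq_add_sq (x t) (y t)

theorem hasDerivAt_y_mul_angularMomentum (h : PlanarMotionAt lam k c₁ x y x' y' t) :
    HasDerivAt (fun s => y s * (x s * y' s - y s * x' s))
      ((x t * y' t - y t * x' t) * y' t + 2 * c₁ * x t / y t ^ 2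
        + k * (y t ^ 2 + 2 * x t ^ 2) / (y t ^ 2 * √(x t ^ 2 + y t ^ 2))) t := by
  have hy := h.y_ne_zero
  have hR := h.radius_pos
  refine (h.hasDerivAt_y.fun_mul h.hasDerivAt_angularMomentum).congr_deriv ?_
  field_simp
  ring

theorem hasDerivAt_deriv_y_mul_angularMomentum (h : PlanarMotionAt lam k c₁ x y x' y' t) :
    HasDerivAt (fun s => (x s * y' s - y s * x' s) * y' s + 2 * c₁ * x s / y s ^ 2
        + k * (y s ^ 2 + 2 * x s ^ 2) / (y s ^ 2 * √(x s ^ 2 + y s ^ 2)))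
      (lam ^ 2 * (y t * (x t * y' t - y t * x' t))) t := by
  have hy := h.y_ne_zero
  have hR := h.radius_pos
  refine ((h.hasDerivAt_angularMomentum.fun_mul h.hasDerivAt_y').fun_add
    ((h.hasDerivAt_x.const_mul (2 * c₁)).fun_div (h.hasDerivAt_y.fun_pow 2) (pow_ne_zero 2 hy))
    |>.fun_add ((((h.hasDerivAt_y.fun_pow 2).fun_add
      ((h.hasDerivAt_x.fun_pow 2).const_mul 2)).const_mul k).fun_div
        ((h.hasDerivAt_y.fun_pow 2).fun_mul h.hasDerivAt_radius)
        (mul_ne_zero (pow_ne_zero 2 hy) hR.ne'))).congr_deriv ?_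
  field_simp
  linear_combination k * y t * (y t ^ 2 * y' t + 4 * x t * y t * x' t - 2 * x t ^ 2 * y' t)
    * sq_sqrt_sq_add_sq (x t) (y t)

theorem hasDerivAt_I₄ (h : PlanarMotionAt lam k c₁ x y x' y' t) :
    HasDerivAt (fun s => Real.exp (lam * s) *
      ((x s * y' s - y s * x' s) * (y' s - lam * y s) + 2 * c₁ * x s / y s ^ 2
        + k * (y s ^ 2 + 2 * x s ^ 2) / (y s ^ 2 * √(x s ^ 2 + y s ^ 2)))) 0 t := by
  have := hasDerivAt_exp_mul_sub_mul_of_hasDerivAt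
    (u := fun s => y s * (x s * y' s - y s * x' s))
    h.hasDerivAt_y_mul_angularMomentum h.hasDerivAt_deriv_y_mul_angularMomentum
  exact this.congr_of_eventuallyEq (.of_forall fun s => by ring)

end PlanarMotionAt

structure VerticalMotionAt (lam c₂ : ℝ) (z z' : ℝ → ℝ) (t : ℝ) : Prop where
  hasDerivAt_z : HasDerivAt z (z' t) t
  hasDerivAt_z' : HasDerivAt z' (lam ^ 2 / 4 * z t + 2 * c₂ / z t ^ 3) t
  z_ne_zero : z t ≠ 0

namespace VerticalMotionAt

variable {lam c₂ : ℝ} {z z' : ℝ → ℝ} {t : ℝ}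

theorem hasDerivAt_I₃ (h : VerticalMotionAt lam c₂ z z' t) :
    HasDerivAt (fun s => 1 / 2 * z' s ^ 2 - lam ^ 2 / 8 * z s ^ 2 + c₂ / z s ^ 2) 0 t := by
  have hz := h.z_ne_zero
  refine (((h.hasDerivAt_z'.fun_pow 2).const_mul (1 / 2)).fun_sub
    ((h.hasDerivAt_z.fun_pow 2).const_mul (lam ^ 2 / 8)) |>.fun_add
      ((hasDerivAt_const t c₂).fun_div (h.hasDerivAt_z.fun_pow 2)
        (pow_ne_zero 2 hz))).congr_deriv ?_
  field_simp
  ring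

theorem hasDerivAt_I₅ (h : VerticalMotionAt lam c₂ z z' t) :
    HasDerivAt (fun s => Real.exp (lam * s) * ((z' s - lam / 2 * z s) ^ 2 + 2 * c₂ / z s ^ 2))
      0 t := by
  have hz := h.z_ne_zero
  refine (((hasDerivAt_id' t).const_mul lam).exp.fun_mul
    (((h.hasDerivAt_z'.fun_sub (h.hasDerivAt_z.const_mul (lam / 2))).fun_pow 2).fun_add
      ((hasDerivAt_const t (2 * c₂)).fun_div (h.hasDerivAt_z.fun_pow 2)
        (pow_ne_zero 2 hz)))).congr_deriv ?_
  field_simp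
  ring

end VerticalMotionAt

theorem hasDerivAt_I₁ {lam k c₁ c₂ t : ℝ} {x y z x' y' z' : ℝ → ℝ}
    (hP : PlanarMotionAt lam k c₁ x y x' y' t) (hV : VerticalMotionAt lam c₂ z z' t) :
    HasDerivAt (fun s => 1 / 2 * (x' s ^ 2 + y' s ^ 2 + z' s ^ 2)
      + V18 lam k c₁ c₂ (x s) (y s) (z s)) 0 t := by
  refine (hP.hasDerivAt_energy.fun_add hV.hasDerivAt_I₃).congr_of_eventuallyEq
    (.of_forall fun s => ?_) |>.congr_deriv (add_zero 0)
  unfold V18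
  ring

theorem stmt18_general (lam k c₁ c₂ : ℝ) (a b : ℝ)
    (x y z x' y' z' : ℝ → ℝ)
    (hreg : ∀ t ∈ Set.Ioo a b,
      y t ≠ 0 ∧ z t ≠ 0 ∧ Real.sqrt ((x t) ^ 2 + (y t) ^ 2) ≠ 0)
    (hx : ∀ t ∈ Set.Ioo a b, HasDerivAt x (x' t) t)
    (hy : ∀ t ∈ Set.Ioo a b, HasDerivAt y (y' t) t)
    (hz : ∀ t ∈ Set.Ioo a b, HasDerivAt z (z' t) t)
    (hx' : ∀ t ∈ Set.Ioo a b, HasDerivAt x'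
      (-(deriv (fun s => V18 lam k c₁ c₂ s (y t) (z t)) (x t))) t)
    (hy' : ∀ t ∈ Set.Ioo a b, HasDerivAt y'
      (-(deriv (fun s => V18 lam k c₁ c₂ (x t) s (z t)) (y t))) t)
    (hz' : ∀ t ∈ Set.Ioo a b, HasDerivAt z'
      (-(deriv (fun s => V18 lam k c₁ c₂ (x t) (y t) s) (z t))) t) :
    -- `I₁`: the Hamiltonian
    (∀ t₁ ∈ Set.Ioo a b, ∀ t₂ ∈ Set.Ioo a b,
      1 / 2 * ((x' t₁) ^ 2 + (y' t₁) ^ 2 + (z' t₁) ^ 2)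
          + V18 lam k c₁ c₂ (x t₁) (y t₁) (z t₁) =
      1 / 2 * ((x' t₂) ^ 2 + (y' t₂) ^ 2 + (z' t₂) ^ 2)
          + V18 lam k c₁ c₂ (x t₂) (y t₂) (z t₂)) ∧
    -- `I₂ = (1/2)M₃² + (kR + c₁x)x/y²`
    (∀ t₁ ∈ Set.Ioo a b, ∀ t₂ ∈ Set.Ioo a b,
      1 / 2 * (x t₁ * y' t₁ - y t₁ * x' t₁) ^ 2
          + (k * Real.sqrt ((x t₁) ^ 2 + (y t₁) ^ 2) + c₁ * x t₁) * x t₁ / (y t₁) ^ 2 =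
      1 / 2 * (x t₂ * y' t₂ - y t₂ * x' t₂) ^ 2
          + (k * Real.sqrt ((x t₂) ^ 2 + (y t₂) ^ 2) + c₁ * x t₂) * x t₂ / (y t₂) ^ 2) ∧
    -- `I₃ = (1/2)ż² − (λ²/8)z² + c₂/z²`
    (∀ t₁ ∈ Set.Ioo a b, ∀ t₂ ∈ Set.Ioo a b,
      1 / 2 * (z' t₁) ^ 2 - lam ^ 2 / 8 * (z t₁) ^ 2 + c₂ / (z t₁) ^ 2 =
      1 / 2 * (z' t₂) ^ 2 - lam ^ 2 / 8 * (z t₂) ^ 2 + c₂ / (z t₂) ^ 2) ∧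
    -- `I₄ = e^{λt}[M₃(ẏ − λy) + 2c₁x/y² + k(y² + 2x²)/(y²R)]`
    (∀ t₁ ∈ Set.Ioo a b, ∀ t₂ ∈ Set.Ioo a b,
      Real.exp (lam * t₁) *
        ((x t₁ * y' t₁ - y t₁ * x' t₁) * (y' t₁ - lam * y t₁) + 2 * c₁ * x t₁ / (y t₁) ^ 2
          + k * ((y t₁) ^ 2 + 2 * (x t₁) ^ 2) /
              ((y t₁) ^ 2 * Real.sqrt ((x t₁) ^ 2 + (y t₁) ^ 2))) =
      Real.exp (lam * t₂) *
        ((x t₂ * y' t₂ - y t₂ * x' t₂) * (y' t₂ - lam * y t₂) + 2 * c₁ * x t₂ / (y t₂) ^ 2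
          + k * ((y t₂) ^ 2 + 2 * (x t₂) ^ 2) /
              ((y t₂) ^ 2 * Real.sqrt ((x t₂) ^ 2 + (y t₂) ^ 2)))) ∧
    -- `I₅ = e^{λt}[(ż − (λ/2)z)² + 2c₂/z²]`
    (∀ t₁ ∈ Set.Ioo a b, ∀ t₂ ∈ Set.Ioo a b,
      Real.exp (lam * t₁) * ((z' t₁ - lam / 2 * z t₁) ^ 2 + 2 * c₂ / (z t₁) ^ 2) =
      Real.exp (lam * t₂) * ((z' t₂ - lam / 2 * z t₂) ^ 2 + 2 * c₂ / (z t₂) ^ 2)) := by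
  have planar : ∀ t ∈ Set.Ioo a b, PlanarMotionAt lam k c₁ x y x' y' t := fun t ht =>
    have hyt := (hreg t ht).1
    { hasDerivAt_x := hx t ht
      hasDerivAt_y := hy t ht
      hasDerivAt_x' := (hx' t ht).congr_deriv <| by
        rw [(hasDerivAt_V18_fst lam k c₁ c₂ (z t) hyt).deriv]; ring
      hasDerivAt_y' := (hy' t ht).congr_deriv <| by
        rw [(hasDerivAt_V18_snd lam k c₁ c₂ (z t) hyt).deriv]; ring
      y_ne_zero := hyt }
  have vertical : ∀ t ∈ Set.Ioo a b, VerticalMotionAt lam c₂ z z' t := fun t ht =>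
    have hzt := (hreg t ht).2.1
    { hasDerivAt_z := hz t ht
      hasDerivAt_z' := (hz' t ht).congr_deriv <| by
        rw [(hasDerivAt_V18_thd lam k c₁ c₂ (x t) (y t) hzt).deriv]; ring
      z_ne_zero := hzt }
  have conserved := fun {f : ℝ → ℝ} (hf : ∀ t ∈ Set.Ioo a b, HasDerivAt f 0 t) =>
    isOpen_Ioo.eq_of_hasDerivAt_zero isPreconnected_Ioo hf
  exact ⟨conserved fun t ht => hasDerivAt_I₁ (planar t ht) (vertical t ht),
    conserved fun t ht => (planar t ht).hasDerivAt_I₂,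
    conserved fun t ht => (vertical t ht).hasDerivAt_I₃,
    conserved fun t ht => (planar t ht).hasDerivAt_I₄,
    conserved fun t ht => (vertical t ht).hasDerivAt_I₅⟩

/-- Along every C² solution of the Newtonian system
`q̈^a = −∂V/∂q^a` in `E³` for the potential `V18` (on an interval where
`y ≠ 0`, `z ≠ 0`, `R ≠ 0`), the five quantities `I₁,…,I₅` are constant. -/
theorem stmt18 (lam k c₁ c₂ : ℝ) (hlam : lam ≠ 0) (a b : ℝ)
    (x y z x' y' z' : ℝ → ℝ)
    (hreg : ∀ t ∈ Set.Ioo a b,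
      y t ≠ 0 ∧ z t ≠ 0 ∧ Real.sqrt ((x t) ^ 2 + (y t) ^ 2) ≠ 0)
    (hx : ∀ t ∈ Set.Ioo a b, HasDerivAt x (x' t) t)
    (hy : ∀ t ∈ Set.Ioo a b, HasDerivAt y (y' t) t)
    (hz : ∀ t ∈ Set.Ioo a b, HasDerivAt z (z' t) t)
    (hx' : ∀ t ∈ Set.Ioo a b, HasDerivAt x'
      (-(deriv (fun s => V18 lam k c₁ c₂ s (y t) (z t)) (x t))) t)
    (hy' : ∀ t ∈ Set.Ioo a b, HasDerivAt y'
      (-(deriv (fun s => V18 lam k c₁ c₂ (x t) s (z t)) (y t))) t)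
    (hz' : ∀ t ∈ Set.Ioo a b, HasDerivAt z'
      (-(deriv (fun s => V18 lam k c₁ c₂ (x t) (y t) s) (z t))) t) :
    -- `I₁`: the Hamiltonian
    (∀ t₁ ∈ Set.Ioo a b, ∀ t₂ ∈ Set.Ioo a b,
      1 / 2 * ((x' t₁) ^ 2 + (y' t₁) ^ 2 + (z' t₁) ^ 2)
          + V18 lam k c₁ c₂ (x t₁) (y t₁) (z t₁) =
      1 / 2 * ((x' t₂) ^ 2 + (y' t₂) ^ 2 + (z' t₂) ^ 2)
          + V18 lam k c₁ c₂ (x t₂) (y t₂) (z t₂)) ∧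
    -- `I₂ = (1/2)M₃² + (kR + c₁x)x/y²`
    (∀ t₁ ∈ Set.Ioo a b, ∀ t₂ ∈ Set.Ioo a b,
      1 / 2 * (x t₁ * y' t₁ - y t₁ * x' t₁) ^ 2
          + (k * Real.sqrt ((x t₁) ^ 2 + (y t₁) ^ 2) + c₁ * x t₁) * x t₁ / (y t₁) ^ 2 =
      1 / 2 * (x t₂ * y' t₂ - y t₂ * x' t₂) ^ 2
          + (k * Real.sqrt ((x t₂) ^ 2 + (y t₂) ^ 2) + c₁ * x t₂) * x t₂ / (y t₂) ^ 2) ∧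
    -- `I₃ = (1/2)ż² − (λ²/8)z² + c₂/z²`
    (∀ t₁ ∈ Set.Ioo a b, ∀ t₂ ∈ Set.Ioo a b,
      1 / 2 * (z' t₁) ^ 2 - lam ^ 2 / 8 * (z t₁) ^ 2 + c₂ / (z t₁) ^ 2 =
      1 / 2 * (z' t₂) ^ 2 - lam ^ 2 / 8 * (z t₂) ^ 2 + c₂ / (z t₂) ^ 2) ∧
    -- `I₄ = e^{λt}[M₃(ẏ − λy) + 2c₁x/y² + k(y² + 2x²)/(y²R)]`
    (∀ t₁ ∈ Set.Ioo a b, ∀ t₂ ∈ Set.Ioo a b,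
      Real.exp (lam * t₁) *
        ((x t₁ * y' t₁ - y t₁ * x' t₁) * (y' t₁ - lam * y t₁) + 2 * c₁ * x t₁ / (y t₁) ^ 2
          + k * ((y t₁) ^ 2 + 2 * (x t₁) ^ 2) /
              ((y t₁) ^ 2 * Real.sqrt ((x t₁) ^ 2 + (y t₁) ^ 2))) =
      Real.exp (lam * t₂) *
        ((x t₂ * y' t₂ - y t₂ * x' t₂) * (y' t₂ - lam * y t₂) + 2 * c₁ * x t₂ / (y t₂) ^ 2
          + k * ((y t₂) ^ 2 + 2 * (x t₂) ^ 2) /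
              ((y t₂) ^ 2 * Real.sqrt ((x t₂) ^ 2 + (y t₂) ^ 2)))) ∧
    -- `I₅ = e^{λt}[(ż − (λ/2)z)² + 2c₂/z²]`
    (∀ t₁ ∈ Set.Ioo a b, ∀ t₂ ∈ Set.Ioo a b,
      Real.exp (lam * t₁) * ((z' t₁ - lam / 2 * z t₁) ^ 2 + 2 * c₂ / (z t₁) ^ 2) =
      Real.exp (lam * t₂) * ((z' t₂ - lam / 2 * z t₂) ^ 2 + 2 * c₂ / (z t₂) ^ 2)) :=
  stmt18_general lam k c₁ c₂ a b x y z x' y' z' hreg hx hy hz hx' hy' hz'
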